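/- Let K be a commutative ring, A a finitely generated abelian group, Q ⊂ (A ⊗_ℤ ℝ)^* a closed salient cone, and y ∈ A a Q-cofinal element. Define the positive Novikov ring Λ^{A,Q,+}_K as the inverse limit over x ∈ A (ordered by ⪯_Q) of the quotients F^Q_0 / (F^Q_0 ∩ F^Q_x). Then the natural inclusion F^Q_0 ↪ Λ^{A,Q,+}_K extends to a ring isomorphism from the (y)-adic completion of F^Q_0 onto Λ^{A,Q,+}_K; equivalently, Λ^{A,Q,+}_K ≅ lim_m F^Q_0/(y)ᵐ. -/

import Mathlib

/-- An additive character `A → ℝ`.  Under the hom-tensor adjunction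
`Hom_ℝ(A ⊗_ℤ ℝ, ℝ) ≅ Hom_ℤ(A, ℝ)`, such functions correspond exactly to the elements of the
real dual `(A ⊗_ℤ ℝ)^*` of the (multiplicatively written) abelian group `A`. -/
def IsAddChar {A : Type*} [CommGroup A] (f : A → ℝ) : Prop :=
  ∀ x y : A, f (x * y) = f x + f y

/-- `Q` is a cone in `(A ⊗_ℤ ℝ)^*`: all of its elements lie in the dual space
(i.e. are additive characters) and `Q` is closed under positive linear combinations. -/
def IsFunctionalCone {A : Type*} [CommGroup A] (Q : Set (A → ℝ)) : Prop :=
  (∀ f ∈ Q, IsAddChar f) ∧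
    ∀ f ∈ Q, ∀ g ∈ Q, ∀ α β : ℝ, 0 < α → 0 < β → α • f + β • g ∈ Q

/-- The relation `x ⪯_Q y`, i.e. `f((y·x⁻¹) ⊗ 1) ≥ 0` for all `f ∈ Q`. -/
def ConePreorder {A : Type*} [CommGroup A] (Q : Set (A → ℝ)) (x y : A) : Prop :=
  ∀ f ∈ Q, 0 ≤ f (y * x⁻¹)

/-- A cone is salient if for every nonzero `f ∈ Q` we have `-f ∉ Q`. -/
def IsSalientCone {A : Type*} [CommGroup A] (Q : Set (A → ℝ)) : Prop :=
  ∀ f ∈ Q, f ≠ 0 → -f ∉ Q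

/-- `y` is a `Q`-cofinal element: `0 ⪯_Q y` and the powers of `y` are cofinal in `(A, ⪯_Q)`. -/
def IsCofinalElt {A : Type*} [CommGroup A] (Q : Set (A → ℝ)) (y : A) : Prop :=
  ConePreorder Q 1 y ∧ ∀ a : A, ∃ n : ℕ, ConePreorder Q a (y ^ n)
/-- The inverse limit ring `lim_i R ⧸ I i` of the quotients of `R` by a family of ideals,
along a relation `rel` for which `rel i j` means that there is a transition map
`R ⧸ I j → R ⧸ I i` (i.e. `I j ≤ I i`); it is realized as the subring of compatible
families inside the product `Π i, R ⧸ I i`.  Compatibility of a family `p` is expressed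
by: any representative of `p j` also represents `p i` whenever `rel i j`. -/
def RingInvLimit {R : Type*} [CommRing R] {ι : Type*} (rel : ι → ι → Prop)
    (I : ι → Ideal R) (hle : ∀ i j, rel i j → I j ≤ I i) :
    Subring (∀ i, R ⧸ I i) where
  carrier := {p | ∀ i j, rel i j → ∀ r : R,
    p j = Ideal.Quotient.mk (I j) r → p i = Ideal.Quotient.mk (I i) r}
  mul_mem' {p q} hp hq := by
    intro i j hij r hr
    obtain ⟨s, hs⟩ := Ideal.Quotient.mk_surjective (p j)
    obtain ⟨t, ht⟩ := Ideal.Quotient.mk_surjective (q j)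
    have hpi : p i = Ideal.Quotient.mk (I i) s := hp i j hij s hs.symm
    have hqi : q i = Ideal.Quotient.mk (I i) t := hq i j hij t ht.symm
    have hmem : s * t - r ∈ I j := by
      apply Ideal.Quotient.eq.mp
      rw [map_mul, hs, ht]
      exact hr
    show p i * q i = _
    rw [hpi, hqi, ← map_mul]
    exact Ideal.Quotient.eq.mpr (hle i j hij hmem)
  one_mem' := by
    intro i j hij r hr
    have hmem : (1 : R) - r ∈ I j := by
      apply Ideal.Quotient.eq.mp
      rw [map_one]
      exact hr
    show (1 : R ⧸ I i) = _
    rw [← map_one (Ideal.Quotient.mk (I i))]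
    exact Ideal.Quotient.eq.mpr (hle i j hij hmem)
  add_mem' {p q} hp hq := by
    intro i j hij r hr
    obtain ⟨s, hs⟩ := Ideal.Quotient.mk_surjective (p j)
    obtain ⟨t, ht⟩ := Ideal.Quotient.mk_surjective (q j)
    have hpi : p i = Ideal.Quotient.mk (I i) s := hp i j hij s hs.symm
    have hqi : q i = Ideal.Quotient.mk (I i) t := hq i j hij t ht.symm
    have hmem : s + t - r ∈ I j := by
      apply Ideal.Quotient.eq.mp
      rw [map_add, hs, ht]
      exact hr
    show p i + q i = _
    rw [hpi, hqi, ← map_add]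
    exact Ideal.Quotient.eq.mpr (hle i j hij hmem)
  zero_mem' := by
    intro i j hij r hr
    have hmem : (0 : R) - r ∈ I j := by
      apply Ideal.Quotient.eq.mp
      rw [map_zero]
      exact hr
    show (0 : R ⧸ I i) = _
    rw [← map_zero (Ideal.Quotient.mk (I i))]
    exact Ideal.Quotient.eq.mpr (hle i j hij hmem)
  neg_mem' {p} hp := by
    intro i j hij r hr
    obtain ⟨s, hs⟩ := Ideal.Quotient.mk_surjective (p j)
    have hpi : p i = Ideal.Quotient.mk (I i) s := hp i j hij s hs.symm
    have hmem : -s - r ∈ I j := by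
      apply Ideal.Quotient.eq.mp
      rw [map_neg, hs]
      exact hr
    show -p i = _
    rw [hpi, ← map_neg]
    exact Ideal.Quotient.eq.mpr (hle i j hij hmem)

/-- The canonical ring homomorphism from `R` to the inverse limit `lim_i R ⧸ I i`,
sending `r` to the compatible family of its residue classes. -/
def ringInvLimitDiag {R : Type*} [CommRing R] {ι : Type*} (rel : ι → ι → Prop)
    (I : ι → Ideal R) (hle : ∀ i j, rel i j → I j ≤ I i) :
    R →+* ↥(RingInvLimit rel I hle) where
  toFun r := ⟨fun i => Ideal.Quotient.mk (I i) r, by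
    intro i j hij r' hr'
    exact Ideal.Quotient.eq.mpr (hle i j hij (Ideal.Quotient.eq.mp hr'))⟩
  map_one' := Subtype.ext (funext fun i => map_one _)
  map_mul' a b := Subtype.ext (funext fun i => map_mul _ _ _)
  map_zero' := Subtype.ext (funext fun i => map_zero _)
  map_add' a b := Subtype.ext (funext fun i => map_add _ _ _)

/-- The `(y)`-adic completion `lim_n R/(y)ⁿ` of a commutative ring `R`, realized as the
inverse limit of the quotients by the powers of the principal ideal `(y)`. -/
def AdicCompl (R : Type*) [CommRing R] (y : R) :
    Subring (∀ n : ℕ, R ⧸ Ideal.span {y} ^ n) :=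
  RingInvLimit (· ≤ ·) (fun n => Ideal.span {y} ^ n)
    (fun _ _ h => Ideal.pow_le_pow_right h)

/-- The canonical map `R → lim_n R/(y)ⁿ` into the `(y)`-adic completion. -/
def adicDiag (R : Type*) [CommRing R] (y : R) : R →+* ↥(AdicCompl R y) :=
  ringInvLimitDiag (· ≤ ·) (fun n => Ideal.span {y} ^ n)
    (fun _ _ h => Ideal.pow_le_pow_right h)
/-- Transitivity of `⪯_Q` (for `Q` consisting of additive characters). -/
theorem conePreorder_trans {A : Type*} [CommGroup A] {Q : Set (A → ℝ)}
    (hQ : ∀ f ∈ Q, IsAddChar f) {x y z : A}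
    (h1 : ConePreorder Q x y) (h2 : ConePreorder Q y z) : ConePreorder Q x z := by
  intro f hf
  have e : f (z * x⁻¹) = f (z * y⁻¹) + f (y * x⁻¹) := by
    rw [← hQ f hf (z * y⁻¹) (y * x⁻¹)]
    congr 1
    group
  rw [e]
  exact add_nonneg (h2 f hf) (h1 f hf)

/-- The ideal `F^Q_0 ∩ F^Q_x` of the monoid algebra `F^Q_0 = K[S]`
(where `S = S^Q_0`), generated by the monoid elements `a ∈ S` with `x ⪯_Q a`. -/
noncomputable def novikovIdeal (K : Type*) [CommRing K] {A : Type*} [CommGroup A]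
    (Q : Set (A → ℝ)) (S : Submonoid A) (x : A) : Ideal (MonoidAlgebra K ↥S) :=
  Ideal.span (⇑(MonoidAlgebra.of K ↥S) '' {a : ↥S | ConePreorder Q x ↑a})

theorem novikovIdeal_mono (K : Type*) [CommRing K] {A : Type*} [CommGroup A]
    {Q : Set (A → ℝ)} (hQ : ∀ f ∈ Q, IsAddChar f) (S : Submonoid A) :
    ∀ x x' : A, ConePreorder Q x x' → novikovIdeal K Q S x' ≤ novikovIdeal K Q S x := by
  intro x x' h
  apply Ideal.span_mono
  apply Set.image_mono
  intro a ha
  exact conePreorder_trans hQ h ha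

/-- The positive Novikov ring `Λ^{A,Q,+}_K`, i.e. the inverse limit over `x ∈ A`
(ordered by `⪯_Q`) of the quotients `F^Q_0 / (F^Q_0 ∩ F^Q_x)`. -/
noncomputable def posNovikov (K : Type*) [CommRing K] {A : Type*} [CommGroup A]
    (Q : Set (A → ℝ)) (hQ : ∀ f ∈ Q, IsAddChar f) (S : Submonoid A) :
    Subring (∀ x : A, MonoidAlgebra K ↥S ⧸ novikovIdeal K Q S x) :=
  RingInvLimit (ConePreorder Q) (novikovIdeal K Q S) (novikovIdeal_mono K hQ S)

/-!
Every `a` with `yⁿ ⪯_Q a` is `yⁿ` times an element of `S^Q_0`, so `F^Q_{yⁿ} = (y)ⁿ` in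
`F^Q_0`. As the powers of `y` are cofinal in `(A, ⪯_Q)`, the system `(F^Q_0 / (y)ⁿ)ₙ` is a
cofinal subsystem of the one defining `Λ^{A,Q,+}_K`, and an inverse limit does not change when
one passes to a cofinal subsystem.
-/

namespace RingInvLimit

variable {R : Type*} [CommRing R]
  {ι : Type*} {rel : ι → ι → Prop} {I : ι → Ideal R} {hI : ∀ i j, rel i j → I j ≤ I i}
  {κ : Type*} {rel' : κ → κ → Prop} {J : κ → Ideal R} {hJ : ∀ k l, rel' k l → J l ≤ J k}

theorem exists_mk_eq_mk_eq {p : ∀ i, R ⧸ I i} (hp : p ∈ RingInvLimit rel I hI) {i j k : ι}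
    (hik : rel i k) (hjk : rel j k) :
    ∃ s : R, p i = Ideal.Quotient.mk (I i) s ∧ p j = Ideal.Quotient.mk (I j) s := by
  obtain ⟨s, hs⟩ := Ideal.Quotient.mk_surjective (p k)
  exact ⟨s, hp i k hik s hs.symm, hp j k hjk s hs.symm⟩

def comap (φ : κ → ι) (hφ : ∀ k, I (φ k) ≤ J k)
    (hcompat : ∀ k l, rel' k l → ∃ i, rel (φ k) i ∧ rel (φ l) i) :
    RingInvLimit rel I hI →+* RingInvLimit rel' J hJ where
  toFun p := ⟨fun k => Ideal.Quotient.factor (hφ k) (p.1 (φ k)), by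
    intro k l hkl r hr
    obtain ⟨i, hki, hli⟩ := hcompat k l hkl
    obtain ⟨s, hk, hl⟩ := exists_mk_eq_mk_eq p.2 hki hli
    dsimp only at hr ⊢
    rw [hl, Ideal.Quotient.factor_mk] at hr
    rw [hk, Ideal.Quotient.factor_mk]
    exact Ideal.Quotient.eq.mpr (hJ k l hkl (Ideal.Quotient.eq.mp hr))⟩
  map_one' := Subtype.ext (funext fun _ => map_one _)
  map_mul' _ _ := Subtype.ext (funext fun _ => map_mul _ _ _)
  map_zero' := Subtype.ext (funext fun _ => map_zero _)
  map_add' _ _ := Subtype.ext (funext fun _ => map_add _ _ _)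

theorem comap_comp_ringInvLimitDiag (φ : κ → ι) (hφ : ∀ k, I (φ k) ≤ J k)
    (hcompat : ∀ k l, rel' k l → ∃ i, rel (φ k) i ∧ rel (φ l) i) :
    (comap φ hφ hcompat).comp (ringInvLimitDiag rel I hI) = ringInvLimitDiag rel' J hJ :=
  RingHom.ext fun r => Subtype.ext (funext fun k => Ideal.Quotient.factor_mk (hφ k) r)

theorem comap_comap (φ : κ → ι) (hφ : ∀ k, I (φ k) ≤ J k)
    (hcompat : ∀ k l, rel' k l → ∃ i, rel (φ k) i ∧ rel (φ l) i)
    (ψ : ι → κ) (hψ : ∀ i, J (ψ i) ≤ I i)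
    (hcompat' : ∀ i j, rel i j → ∃ k, rel' (ψ i) k ∧ rel' (ψ j) k)
    (hround : ∀ i, ∃ j, rel (φ (ψ i)) j ∧ rel i j) (p : RingInvLimit rel I hI) :
    comap ψ hψ hcompat' (comap (hJ := hJ) φ hφ hcompat p) = p := by
  refine Subtype.ext (funext fun i => ?_)
  obtain ⟨j, hφψj, hij⟩ := hround i
  obtain ⟨s, hφψ, hi⟩ := exists_mk_eq_mk_eq p.2 hφψj hij
  change Ideal.Quotient.factor _ (Ideal.Quotient.factor _ (p.1 (φ (ψ i)))) = p.1 i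
  rw [hφψ, hi, Ideal.Quotient.factor_mk, Ideal.Quotient.factor_mk]

theorem exists_equiv_of_cofinal [Preorder κ] [IsDirectedOrder κ]
    {hJ : ∀ k l : κ, k ≤ l → J l ≤ J k} (g : κ → ι) (hgJ : ∀ k, I (g k) = J k)
    (hg_mono : ∀ k l, k ≤ l → rel (g k) (g l)) (hg_cofinal : ∀ i, ∃ k, rel i (g k)) :
    ∃ e : RingInvLimit (· ≤ ·) J hJ ≃+* RingInvLimit rel I hI,
      ∀ r, e (ringInvLimitDiag (· ≤ ·) J hJ r) = ringInvLimitDiag rel I hI r := by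
  choose n hn using hg_cofinal
  have hgJn : ∀ i, J (n i) ≤ I i := fun i => (hgJ (n i)).ge.trans (hI _ _ (hn i))
  have hg_compat : ∀ k l, k ≤ l → ∃ i, rel (g k) i ∧ rel (g l) i :=
    fun k l hkl => ⟨g l, hg_mono k l hkl, hg_mono l l le_rfl⟩
  have hn_compat : ∀ i j, rel i j → ∃ k, n i ≤ k ∧ n j ≤ k :=
    fun i j _ => exists_ge_ge (n i) (n j)
  refine ⟨RingEquiv.ofRingHom (comap n hgJn hn_compat) (comap g (fun k => (hgJ k).le) hg_compat)
    (RingHom.ext fun p => comap_comap g _ hg_compat n hgJn hn_compat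
      (fun i => ⟨g (n i), hg_mono _ _ le_rfl, hn i⟩) p)
    (RingHom.ext fun p => comap_comap n hgJn hn_compat g _ hg_compat
      (fun k => exists_ge_ge (n (g k)) k) p), fun r => ?_⟩
  exact RingHom.congr_fun (comap_comp_ringInvLimitDiag n hgJn hn_compat) r

end RingInvLimit

theorem IsAddChar.map_one {A : Type*} [CommGroup A] {f : A → ℝ} (hf : IsAddChar f) :
    f 1 = 0 := by
  simpa using hf 1 1

theorem IsAddChar.map_pow {A : Type*} [CommGroup A] {f : A → ℝ} (hf : IsAddChar f)
    (x : A) : ∀ n : ℕ, f (x ^ n) = n * f x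
  | 0 => by simpa using hf.map_one
  | n + 1 => by
    rw [pow_succ, hf, hf.map_pow x n]
    push_cast
    ring

theorem conePreorder_refl {A : Type*} [CommGroup A] {Q : Set (A → ℝ)}
    (hQ : ∀ f ∈ Q, IsAddChar f) (x : A) : ConePreorder Q x x := by
  intro f hf
  rw [mul_inv_cancel, (hQ f hf).map_one]

theorem conePreorder_pow_pow {A : Type*} [CommGroup A] {Q : Set (A → ℝ)}
    (hQ : ∀ f ∈ Q, IsAddChar f) {y : A} (hy : ConePreorder Q 1 y) {n k : ℕ}
    (hnk : n ≤ k) : ConePreorder Q (y ^ n) (y ^ k) := by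
  intro f hf
  have hfy : 0 ≤ f y := by simpa using hy f hf
  rw [← pow_sub y hnk, (hQ f hf).map_pow]
  positivity

theorem novikovIdeal_pow_eq_span_pow (K : Type*) [CommRing K] {A : Type*} [CommGroup A]
    {Q : Set (A → ℝ)} (hQ : ∀ f ∈ Q, IsAddChar f) (S : Submonoid A)
    (hS : ∀ a : A, ConePreorder Q 1 a → a ∈ S) {y : A} (hyS : y ∈ S) (n : ℕ) :
    novikovIdeal K Q S (y ^ n) = Ideal.span {MonoidAlgebra.of K ↥S ⟨y, hyS⟩} ^ n := by
  rw [Ideal.span_singleton_pow, ← map_pow]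
  apply le_antisymm
  · rw [novikovIdeal, Ideal.span_le]
    rintro _ ⟨a, ha, rfl⟩
    have hquot : (↑a : A) * (y ^ n)⁻¹ ∈ S := hS _ fun f hf => by simpa using ha f hf
    have hfactor : a = (⟨y, hyS⟩ : ↥S) ^ n * ⟨(↑a : A) * (y ^ n)⁻¹, hquot⟩ := by
      ext
      simp only [Submonoid.coe_mul, SubmonoidClass.coe_pow]
      rw [mul_comm, inv_mul_cancel_right]
    rw [hfactor, map_mul]
    exact Ideal.mem_span_singleton.mpr ⟨_, rfl⟩
  · rw [Ideal.span_le, Set.singleton_subset_iff]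
    exact Ideal.subset_span ⟨(⟨y, hyS⟩ : ↥S) ^ n, conePreorder_refl hQ _, rfl⟩

theorem adicCompletion_isom_posNovikov_general
    {A K : Type*} [CommGroup A] [CommRing K]
    (Q : Set (A → ℝ)) (hQ : IsFunctionalCone Q)
    (S : Submonoid A) (hS : ∀ a : A, a ∈ S ↔ ConePreorder Q 1 a)
    (y : A) (hy : IsCofinalElt Q y)
    (y₀ : MonoidAlgebra K ↥S) (hy₀ : y₀ = MonoidAlgebra.of K ↥S ⟨y, (hS y).mpr hy.1⟩) :
    ∃ e : ↥(AdicCompl (MonoidAlgebra K ↥S) y₀) ≃+* ↥(posNovikov K Q hQ.1 S),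
      ∀ r : MonoidAlgebra K ↥S,
        e (adicDiag (MonoidAlgebra K ↥S) y₀ r) =
          ringInvLimitDiag (ConePreorder Q) (novikovIdeal K Q S)
            (novikovIdeal_mono K hQ.1 S) r := by
  subst hy₀
  exact RingInvLimit.exists_equiv_of_cofinal (y ^ ·)
    (novikovIdeal_pow_eq_span_pow K hQ.1 S (fun a => (hS a).mpr) _)
    (fun _ _ => conePreorder_pow_pow hQ.1 hy.1) hy.2

/-- for a closed salient cone `Q` with dual monoid `S = S^Q_0` and a
`Q`-cofinal element `y`, the natural inclusion of `F^Q_0 = K[S]` into the positive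
Novikov ring `Λ^{A,Q,+}_K = lim_x F^Q_0/(F^Q_0 ∩ F^Q_x)` extends to a ring isomorphism
from the `(y)`-adic completion `lim_m F^Q_0/(y)ᵐ` of `F^Q_0` onto `Λ^{A,Q,+}_K`. -/
theorem adicCompletion_isom_posNovikov
    {A K : Type*} [CommGroup A] [Group.FG A] [CommRing K]
    (Q : Set (A → ℝ)) (hQ : IsFunctionalCone Q) (hclosed : IsClosed Q)
    (hsalient : IsSalientCone Q)
    (S : Submonoid A) (hS : ∀ a : A, a ∈ S ↔ ConePreorder Q 1 a)
    (y : A) (hy : IsCofinalElt Q y)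
    (y₀ : MonoidAlgebra K ↥S) (hy₀ : y₀ = MonoidAlgebra.of K ↥S ⟨y, (hS y).mpr hy.1⟩) :
    ∃ e : ↥(AdicCompl (MonoidAlgebra K ↥S) y₀) ≃+* ↥(posNovikov K Q hQ.1 S),
      ∀ r : MonoidAlgebra K ↥S,
        e (adicDiag (MonoidAlgebra K ↥S) y₀ r) =
          ringInvLimitDiag (ConePreorder Q) (novikovIdeal K Q S)
            (novikovIdeal_mono K hQ.1 S) r :=
  adicCompletion_isom_posNovikov_general Q hQ S hS y hy y₀ hy₀
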